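/- arXiv:2102.07903 — 2 statements merged into one kernel-verified Lean document; each statement's English description precedes it below -/
import Mathlib

section
/- For k ≥ 3, let φ(s) = sqrt(1+s^2), P(s) = φ'(s)/(s φ''(s)) = 1+s^2 and Q(s) = (sφ'(s) - φ(s))/φ''(s) = -(1+s^2). Then the function σ0(t) = (1 + t^4)^{1/4} is a supersolution of the ODE σ'' + k P(σ') σ'/t + k Q(σ')/σ = 0 on (0, ∞), that is, σ0''(t) + k P(σ0'(t)) σ0'(t)/t + k Q(σ0'(t))/σ0(t) ≤ 0 for all t > 0. -/
theorem stmt_6 (k : ℕ) (hk : 3 ≤ k)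
    (φ P Q σ0 : ℝ → ℝ)
    (hφ : ∀ s : ℝ, φ s = Real.sqrt (1 + s ^ 2))
    (hP : ∀ s : ℝ, P s = deriv φ s / (s * deriv (deriv φ) s))
    (hQ : ∀ s : ℝ, Q s = (s * deriv φ s - φ s) / deriv (deriv φ) s)
    (hσ0 : ∀ t : ℝ, σ0 t = (1 + t ^ 4) ^ ((1 : ℝ) / 4)) :
    ∀ t : ℝ, 0 < t →
      deriv (deriv σ0) t + k * P (deriv σ0 t) * (deriv σ0 t) / t
        + k * Q (deriv σ0 t) / σ0 t ≤ 0 := by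
  have hφe : φ = fun s : ℝ => Real.sqrt (1 + s ^ 2) := funext hφ
  have hσe : σ0 = fun t : ℝ => (1 + t ^ 4) ^ ((1 : ℝ) / 4) := funext hσ0
  -- first derivative of φ
  have hd1 : ∀ s : ℝ, HasDerivAt φ (s / Real.sqrt (1 + s ^ 2)) s := by
    intro s
    rw [hφe]
    have h0 : (0:ℝ) < 1 + s ^ 2 := by positivity
    have h := (((hasDerivAt_pow 2 s).const_add 1).sqrt h0.ne')
    convert h using 1
    rw [pow_one, eq_div_iff (by positivity)]
    field_simp
    ring
  have hφ' : deriv φ = fun s : ℝ => s / Real.sqrt (1 + s ^ 2) :=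
    funext fun s => (hd1 s).deriv
  -- second derivative of φ
  have hd2 : ∀ s : ℝ, HasDerivAt (deriv φ)
      (1 / ((1 + s ^ 2) * Real.sqrt (1 + s ^ 2))) s := by
    intro s
    rw [hφ']
    have h0 : (0:ℝ) < 1 + s ^ 2 := by positivity
    have hs : Real.sqrt (1 + s ^ 2) ≠ 0 := by positivity
    have hsq : Real.sqrt (1 + s ^ 2) * Real.sqrt (1 + s ^ 2) = 1 + s ^ 2 :=
      Real.mul_self_sqrt h0.le
    have h := (hasDerivAt_id s).div (((hasDerivAt_pow 2 s).const_add 1).sqrt h0.ne') hs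
    refine h.congr_deriv ?_
    symm
    rw [pow_one]
    simp only [id]
    field_simp
    linear_combination (-2 * s ^ 2) * hsq
  have hφ'' : ∀ s : ℝ, deriv (deriv φ) s = 1 / ((1 + s ^ 2) * Real.sqrt (1 + s ^ 2)) :=
    fun s => (hd2 s).deriv
  -- values of P and Q
  have hPval : ∀ s : ℝ, 0 < s → P s = 1 + s ^ 2 := by
    intro s hs0
    have h0 : (0:ℝ) < 1 + s ^ 2 := by positivity
    have hsr : Real.sqrt (1 + s ^ 2) ≠ 0 := by positivity
    have hsq : Real.sqrt (1 + s ^ 2) * Real.sqrt (1 + s ^ 2) = 1 + s ^ 2 :=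
      Real.mul_self_sqrt h0.le
    rw [hP s, hφ'' s, hφ']
    simp only
    set r := Real.sqrt (1 + s ^ 2) with hr
    field_simp
  have hQval : ∀ s : ℝ, Q s = -(1 + s ^ 2) := by
    intro s
    have h0 : (0:ℝ) < 1 + s ^ 2 := by positivity
    have hsr : Real.sqrt (1 + s ^ 2) ≠ 0 := by positivity
    have hsq : Real.sqrt (1 + s ^ 2) * Real.sqrt (1 + s ^ 2) = 1 + s ^ 2 :=
      Real.mul_self_sqrt h0.le
    rw [hQ s, hφ'' s, hφ', hφ s]
    simp only
    set r := Real.sqrt (1 + s ^ 2) with hr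
    field_simp
    linear_combination (-1:ℝ) * hsq
  -- first derivative of σ0
  have hdσ1 : ∀ t : ℝ, HasDerivAt σ0 (t ^ 3 * (1 + t ^ 4) ^ (-(3:ℝ)/4)) t := by
    intro t
    rw [hσe]
    have h0 : (0:ℝ) < 1 + t ^ 4 := by positivity
    have h := ((hasDerivAt_pow 4 t).const_add 1).rpow_const (p := (1:ℝ)/4) (Or.inl h0.ne')
    convert h using 1
    rw [show (1:ℝ)/4 - 1 = -(3:ℝ)/4 by norm_num]
    push_cast
    ring
  have hσ' : deriv σ0 = fun t : ℝ => t ^ 3 * (1 + t ^ 4) ^ (-(3:ℝ)/4) :=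
    funext fun t => (hdσ1 t).deriv
  -- second derivative of σ0
  have hdσ2 : ∀ t : ℝ, HasDerivAt (deriv σ0)
      (3 * t ^ 2 * (1 + t ^ 4) ^ (-(7:ℝ)/4)) t := by
    intro t
    rw [hσ']
    have h0 : (0:ℝ) < 1 + t ^ 4 := by positivity
    have h := (hasDerivAt_pow 3 t).mul
      (((hasDerivAt_pow 4 t).const_add 1).rpow_const (p := -(3:ℝ)/4) (Or.inl h0.ne'))
    refine h.congr_deriv ?_
    symm
    have e1 : (1 + t ^ 4) ^ (-(3:ℝ)/4) = (1 + t ^ 4) ^ (-(7:ℝ)/4) * (1 + t ^ 4) := by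
      rw [show (-(3:ℝ)/4) = -(7:ℝ)/4 + 1 by norm_num, Real.rpow_add h0, Real.rpow_one]
    have e2 : (1 + t ^ 4) ^ (-(3:ℝ)/4 - 1) = (1 + t ^ 4) ^ (-(7:ℝ)/4) := by norm_num
    rw [e2]
    push_cast
    rw [e1]
    ring
  have hσ'' : ∀ t : ℝ, deriv (deriv σ0) t = 3 * t ^ 2 * (1 + t ^ 4) ^ (-(7:ℝ)/4) :=
    fun t => (hdσ2 t).deriv
  -- main estimate
  intro t ht
  have h0 : (0:ℝ) < 1 + t ^ 4 := by positivity
  set a : ℝ := (1 + t ^ 4) ^ ((1:ℝ)/4) with ha_def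
  have ha : 0 < a := Real.rpow_pos_of_pos h0 _
  have ha4 : a ^ 4 = 1 + t ^ 4 := by
    rw [ha_def, ← Real.rpow_natCast ((1 + t ^ 4) ^ ((1:ℝ)/4)) 4, ← Real.rpow_mul h0.le]
    norm_num
  have hm3 : (1 + t ^ 4) ^ (-(3:ℝ)/4) = (a ^ 3)⁻¹ := by
    rw [ha_def, ← Real.rpow_natCast ((1 + t ^ 4) ^ ((1:ℝ)/4)) 3, ← Real.rpow_mul h0.le,
      show (-(3:ℝ)/4) = -((1:ℝ)/4 * 3) by norm_num, Real.rpow_neg h0.le]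
    norm_num
  have hm7 : (1 + t ^ 4) ^ (-(7:ℝ)/4) = (a ^ 7)⁻¹ := by
    rw [ha_def, ← Real.rpow_natCast ((1 + t ^ 4) ^ ((1:ℝ)/4)) 7, ← Real.rpow_mul h0.le,
      show (-(7:ℝ)/4) = -((1:ℝ)/4 * 7) by norm_num, Real.rpow_neg h0.le]
    norm_num
  have hs : deriv σ0 t = t ^ 3 * (a ^ 3)⁻¹ := by
    rw [hσ']; simp only; rw [hm3]
  have hspos : 0 < deriv σ0 t := by rw [hs]; positivity
  rw [hσ'' t, hm7, hPval _ hspos, hQval, hs, hσ0 t, ← ha_def]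
  have hk3 : (3:ℝ) ≤ (k:ℝ) := by exact_mod_cast hk
  have hfact : (a ^ 2 - t ^ 2) * (a ^ 6 + t ^ 6) = a ^ 4 - a ^ 2 * t ^ 2 + t ^ 4 := by
    linear_combination (a ^ 4 - a ^ 2 * t ^ 2 + t ^ 4) * ha4
  have hub : 3 * t ^ 2 * a ^ 2 ≤ (k:ℝ) * (a ^ 4 - a ^ 2 * t ^ 2 + t ^ 4) := by
    nlinarith [sq_nonneg (a ^ 2 - t ^ 2), sq_nonneg (a * t), hk3,
      mul_nonneg (sub_nonneg.2 hk3) (sq_nonneg (a ^ 2 - t ^ 2)),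
      mul_nonneg (sub_nonneg.2 hk3) (sq_nonneg (a * t))]
  have key : 3 * t ^ 2 * a ^ 2 ≤ (k:ℝ) * ((a ^ 6 + t ^ 6) * a ^ 2 - (a ^ 6 + t ^ 6) * t ^ 2) := by
    have h1 : (a ^ 6 + t ^ 6) * a ^ 2 - (a ^ 6 + t ^ 6) * t ^ 2
        = a ^ 4 - a ^ 2 * t ^ 2 + t ^ 4 := by linear_combination hfact
    rw [h1]; exact hub
  have hexpr : 3 * t ^ 2 * (a ^ 7)⁻¹
      + (k:ℝ) * (1 + (t ^ 3 * (a ^ 3)⁻¹) ^ 2) * (t ^ 3 * (a ^ 3)⁻¹) / t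
      + (k:ℝ) * -(1 + (t ^ 3 * (a ^ 3)⁻¹) ^ 2) / a
      = (3 * t ^ 2 * a ^ 2 - (k:ℝ) * ((a ^ 6 + t ^ 6) * a ^ 2 - (a ^ 6 + t ^ 6) * t ^ 2))
        / a ^ 9 := by
    field_simp
    ring
  rw [hexpr]
  apply div_nonpos_of_nonpos_of_nonneg
  · linarith [key]
  · positivity
end

section
/- Let k, l ≥ 1, p ≥ 6, and φ(s) = 1 - l/(p(k+l)) + (l/(p(k+l)))s^p. Define L(s) = [(p-1)((k+l+1)/2 - s) + ks](1-s) and R(s) = ((k+l-1)(k+l - l/p)/(k+l+1))(s^{2-p} - s^2). Then R'(1) < L'(1). -/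
/-
Both derivatives at `s = 1` are explicit: the factor `1 - s` vanishes there, so
`L'(1) = -((p - 1)(k + l - 1)/2 + k)`, and `d/ds (s^(2-p) - s^2) = -p` at `s = 1`, so
`R'(1) = -p (k + l - 1)(k + l - l/p)/(k + l + 1)`. Clearing denominators, the claim becomes a
polynomial inequality in `k, l, p` which holds once `k, l ≥ 1` and `p ≥ 6`.
-/

theorem hasDerivAt_mul_one_sub_at_one {g : ℝ → ℝ} {g' : ℝ} (hg : HasDerivAt g g' 1) :
    HasDerivAt (fun s => g s * (1 - s)) (-g 1) 1 := by
  have h : HasDerivAt (fun s => g s * (1 - s)) (g' * (1 - 1) + g 1 * -1) 1 :=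
    hg.mul ((hasDerivAt_id' 1).const_sub 1)
  exact h.congr_deriv (by ring)

theorem hasDerivAt_rpow_sub_sq_at_one (q : ℝ) :
    HasDerivAt (fun s : ℝ => s ^ q - s ^ 2) (q - 2) 1 := by
  have h : HasDerivAt (fun s : ℝ => s ^ q - s ^ 2) (q * 1 ^ (q - 1) - (2 : ℕ) * 1 ^ (2 - 1)) 1 :=
    (Real.hasDerivAt_rpow_const (Or.inl one_ne_zero)).sub (hasDerivAt_pow 2 1)
  exact h.congr_deriv (by norm_num)

/- With `n = k + l`, clearing denominators leaves `(n - 1)((n - 1)p + k - l + 1) > 2k(n + 1)`;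
at `p = 6` this is `5(k + l)² + 5 > 14k + 10l`. -/
theorem slope_lt_of_one_le_of_six_le {k l p : ℝ} (hk : 1 ≤ k) (hl : 1 ≤ l) (hp : 6 ≤ p) :
    (p - 1) * ((k + l - 1) / 2) + k < (k + l - 1) * (k + l - l / p) / (k + l + 1) * p := by
  have hp0 : p ≠ 0 := by positivity
  have hscale : (k + l - l / p) * p = (k + l) * p - l := by field_simp
  rw [div_mul_eq_mul_div, mul_assoc, hscale, lt_div_iff₀ (by linarith)]
  nlinarith [mul_le_mul_of_nonneg_left hp (sq_nonneg (k + l - 1)),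
    mul_nonneg (sub_nonneg.mpr hk) (sub_nonneg.mpr hl)]

theorem stmt_9 (k l : ℕ) (hk : 1 ≤ k) (hl : 1 ≤ l) (p : ℝ) (hp : 6 ≤ p)
    (L R : ℝ → ℝ)
    (hL : ∀ s : ℝ, L s = ((p - 1) * ((k + l + 1 : ℝ) / 2 - s) + k * s) * (1 - s))
    (hR : ∀ s : ℝ, 0 < s →
      R s = ((k + l - 1 : ℝ) * ((k : ℝ) + l - l / p) / (k + l + 1)) * (s ^ (2 - p) - s ^ 2)) :
    deriv R 1 < deriv L 1 := by
  set C : ℝ := (k + l - 1 : ℝ) * ((k : ℝ) + l - l / p) / (k + l + 1)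
  have hLd : deriv L 1 = -((p - 1) * ((k + l - 1 : ℝ) / 2) + k) := by
    have hlin : HasDerivAt (fun s : ℝ => (p - 1) * ((k + l + 1 : ℝ) / 2 - s) + k * s)
        ((p - 1) * -1 + k * 1) 1 :=
      (((hasDerivAt_id 1).const_sub _).const_mul (p - 1)).add ((hasDerivAt_id 1).const_mul _)
    rw [funext hL, (hasDerivAt_mul_one_sub_at_one hlin).deriv]
    ring
  have hRd : deriv R 1 = -(C * p) := by
    have hR1 : R =ᶠ[nhds 1] fun s : ℝ => C * (s ^ (2 - p) - s ^ 2) :=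
      (eventually_gt_nhds one_pos).mono hR
    rw [hR1.deriv_eq, ((hasDerivAt_rpow_sub_sq_at_one (2 - p)).const_mul C).deriv]
    ring
  rw [hLd, hRd, neg_lt_neg_iff]
  exact slope_lt_of_one_le_of_six_le (by exact_mod_cast hk) (by exact_mod_cast hl) hp
end
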